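/- arXiv:2405.15248 — 2 statements merged into one kernel-verified Lean document; each statement's English description precedes it below -/
import Mathlib

section
/- (Fact 2 of the paper.) For all formulas α and β of Φ_XY, the formula [α]β ↔ □(α → β) is valid. Moreover, there exist α ∈ Φ_XY and φ ∈ Φ_ConSHN-BT such that [α]φ ↔ □(α → φ) is not valid; concretely, with α = p and φ = □p, the formula [p]□p ↔ □(p → □p) is not valid. -/
namespace ConSHN

/-- Formulas of the language Φ_XY, over atomic propositions indexed by ℕ. -/
inductive FXY : Type
  | atom : ℕ → FXY
  | bot  : FXY
  | neg  : FXY → FXY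
  | conj : FXY → FXY → FXY
  | X    : FXY → FXY
  | Y    : FXY → FXY
  deriving DecidableEq

/-- Formulas of the language Φ_ConSHN-BT. -/
inductive F : Type
  | atom : ℕ → F
  | bot  : F
  | neg  : F → F
  | conj : F → F → F
  | X    : F → F
  | Y    : F → F
  | con  : FXY → F → F
  deriving DecidableEq

namespace FXY

def top : FXY := neg bot
def imp (a b : FXY) : FXY := neg (conj a (neg b))
def or (a b : FXY) : FXY := neg (conj (neg a) (neg b))
def iff (a b : FXY) : FXY := conj (imp a b) (imp b a)

/-- n-fold application of X. -/
def Xn : ℕ → FXY → FXY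
  | 0, a => a
  | n+1, a => X (Xn n a)

/-- n-fold application of Y. -/
def Yn : ℕ → FXY → FXY
  | 0, a => a
  | n+1, a => Y (Yn n a)

/-- The embedding of Φ_XY into Φ_ConSHN-BT. -/
def toF : FXY → F
  | atom p => .atom p
  | bot => .bot
  | neg a => .neg (toF a)
  | conj a b => .conj (toF a) (toF b)
  | X a => .X (toF a)
  | Y a => .Y (toF a)

/-- Purely propositional formulas (no occurrence of X or Y). -/
inductive IsPL : FXY → Prop
  | atom (p : ℕ) : IsPL (atom p)
  | bot : IsPL bot
  | neg {a} : IsPL a → IsPL (neg a)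
  | conj {a b} : IsPL a → IsPL b → IsPL (conj a b)

/-- The language Φ_N-XY : β ::= Xⁿp | Xⁿ⊥ | Yⁿp | Yⁿ⊥ | ¬β | (β ∧ β). -/
inductive NXY : FXY → Prop
  | xatom (n p : ℕ) : NXY (Xn n (atom p))
  | xbot (n : ℕ) : NXY (Xn n bot)
  | yatom (n p : ℕ) : NXY (Yn n (atom p))
  | ybot (n : ℕ) : NXY (Yn n bot)
  | neg {a} : NXY a → NXY (neg a)
  | conj {a b} : NXY a → NXY b → NXY (conj a b)

end FXY

namespace F

def top : F := neg bot
def imp (a b : F) : F := neg (conj a (neg b))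
def or (a b : F) : F := neg (conj (neg a) (neg b))
def iff (a b : F) : F := conj (imp a b) (imp b a)

/-- ⟨α⟩φ := ¬[α]¬φ -/
def dcon (α : FXY) (φ : F) : F := neg (con α (neg φ))

/-- □φ := [⊤]φ -/
def box (φ : F) : F := con FXY.top φ

/-- ◇φ := ¬□¬φ -/
def dia (φ : F) : F := neg (box (neg φ))

/-- Closed formulas of Φ_ConSHN-BT : χ ::= [α]φ | ¬χ | (χ ∧ χ). -/
inductive Closed : F → Prop
  | con (α : FXY) (φ : F) : Closed (con α φ)
  | neg {χ} : Closed χ → Closed (neg χ)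
  | conj {χ₁ χ₂} : Closed χ₁ → Closed χ₂ → Closed (conj χ₁ χ₂)

/-- The language Φ_Con-XY : φ ::= Xⁿp | Xⁿ⊥ | Yⁿp | Yⁿ⊥ | ¬φ | (φ ∧ φ) | [β]φ, β ∈ Φ_N-XY. -/
inductive ConXY : F → Prop
  | xatom (n p : ℕ) : ConXY (FXY.Xn n (.atom p)).toF
  | xbot (n : ℕ) : ConXY (FXY.Xn n .bot).toF
  | yatom (n p : ℕ) : ConXY (FXY.Yn n (.atom p)).toF
  | ybot (n : ℕ) : ConXY (FXY.Yn n .bot).toF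
  | neg {φ} : ConXY φ → ConXY (neg φ)
  | conj {φ ψ} : ConXY φ → ConXY ψ → ConXY (conj φ ψ)
  | con {β : FXY} {φ} : β.NXY → ConXY φ → ConXY (con β φ)

/-- The language Φ_One□-XY : φ ::= β | ¬φ | (φ ∧ φ) | □β, β ∈ Φ_N-XY. -/
inductive OneBox : F → Prop
  | base {β : FXY} : β.NXY → OneBox β.toF
  | neg {φ} : OneBox φ → OneBox (neg φ)
  | conj {φ ψ} : OneBox φ → OneBox ψ → OneBox (conj φ ψ)
  | box {β : FXY} : β.NXY → OneBox (box β.toF)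

end F

/-- A branching-time model. -/
structure Model where
  W : Type
  lt : W → W → Prop
  V : ℕ → Set W
  nonempty : Nonempty W
  serial : ∀ w, ∃ v, lt w v
  root : W
  reach : ∀ w : W, ∃! l : List W,
    List.Chain' lt l ∧ l.head? = some root ∧ l.getLast? = some w

/-- The set TL(M) of timelines of the model M. -/
def Timeline (M : Model) : Set (ℕ → M.W) :=
  {π | π 0 = M.root ∧ ∀ i, M.lt (π i) (π (i + 1))}

/-- AT(C): the acceptable timelines by a context C (AT(∅) = TL(M)). -/
def AT (M : Model) (C : Set (Set (ℕ → M.W))) : Set (ℕ → M.W) :=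
  Timeline M ∩ ⋂₀ C

/-- Truth of Φ_XY formulas at (M, π, i) (independent of contexts). -/
def satXY (M : Model) (π : ℕ → M.W) : ℕ → FXY → Prop
  | i, .atom p => π i ∈ M.V p
  | _, .bot => False
  | i, .neg a => ¬ satXY M π i a
  | i, .conj a b => satXY M π i a ∧ satXY M π i b
  | i, .X a => satXY M π (i + 1) a
  | i, .Y a => 0 < i ∧ satXY M π (i - 1) a

/-- The indefeasible ontic rule ⟨⟨α⟩⟩_i generated by α at instant i. -/
def ruleOf (M : Model) (α : FXY) (i : ℕ) : Set (ℕ → M.W) :=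
  {π | π ∈ Timeline M ∧ satXY M π i α}

/-- The update C + α@i of a context C with α at instant i. -/
def upd (M : Model) (C : Set (Set (ℕ → M.W))) (α : FXY) (i : ℕ) :
    Set (Set (ℕ → M.W)) :=
  insert (ruleOf M α i) C

/-- Truth of Φ_ConSHN-BT formulas at (M, C, π, i). -/
def sat (M : Model) : Set (Set (ℕ → M.W)) → (ℕ → M.W) → ℕ → F → Prop
  | _, π, i, .atom p => π i ∈ M.V p
  | _, _, _, .bot => False
  | C, π, i, .neg φ => ¬ sat M C π i φ
  | C, π, i, .conj φ ψ => sat M C π i φ ∧ sat M C π i ψ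
  | C, π, i, .X φ => sat M C π (i + 1) φ
  | C, π, i, .Y φ => 0 < i ∧ sat M C π (i - 1) φ
  | C, π, i, .con α φ =>
      ∀ π' ∈ AT M (upd M C α i), sat M (upd M C α i) π' i φ

/-- C is a context for M: a finite set of sets of timelines. -/
def IsContext (M : Model) (C : Set (Set (ℕ → M.W))) : Prop :=
  C.Finite ∧ ∀ R ∈ C, R ⊆ Timeline M

/-- Validity: truth at every contextualized pointed model. -/
def Valid (φ : F) : Prop :=
  ∀ (M : Model) (C : Set (Set (ℕ → M.W))) (π : ℕ → M.W) (i : ℕ),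
    IsContext M C → π ∈ AT M C → sat M C π i φ

/-- Satisfiability: truth at some contextualized pointed model. -/
def Satisfiable (φ : F) : Prop :=
  ∃ (M : Model) (C : Set (Set (ℕ → M.W))) (π : ℕ → M.W) (i : ℕ),
    IsContext M C ∧ π ∈ AT M C ∧ sat M C π i φ

/-- Propositional evaluation: ⊥, ¬, ∧ are interpreted, all other formulas
are treated as propositional atoms evaluated by v. -/
def evalProp (v : F → Prop) : F → Prop
  | .bot => False
  | .neg φ => ¬ evalProp v φ
  | .conj φ ψ => evalProp v φ ∧ evalProp v ψ
  | φ => v φ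

/-- φ is a propositional tautology. -/
def Taut (φ : F) : Prop := ∀ v : F → Prop, evalProp v φ

end ConSHN

open ConSHN

/-! For `α, β ∈ Φ_XY` both sides of `[α]β ↔ □(α → β)` say that every acceptable timeline
satisfying `α` at `i` satisfies `β` at `i`: the update by `α` only filters the acceptable
timelines, `□` does not filter at all, and formulas of `Φ_XY` do not look at the context.

For `φ = □p` the filtering is visible: after the update by `p` all acceptable timelines satisfy `p`
at `i`, so `[p]□p` is true everywhere, whereas `□(p → □p)` holds only when `p` at `i` is settled
among the acceptable timelines. In the binary tree with `p` true exactly at the node `[true]`,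
the two constant timelines disagree on `p` at instant `1`. -/

theorem List.eq_of_isChain_of_getLast?_eq_terminal {α : Type*} {s : α → α → Prop} {x : α}
    (hs : ∀ a b c, s a b → s a c → b = c) (hx : ∀ b, ¬ s x b) :
    ∀ {l₁ l₂ : List α}, IsChain s l₁ → IsChain s l₂ → l₁.getLast? = some x →
      l₂.getLast? = some x → l₁.head? = l₂.head? → l₁ = l₂
  | [], _, _, _, h, _, _ => by simp at h
  | _, [], _, _, _, h, _ => by simp at h
  | [a], [b], _, _, _, _, hh => by simpa using hh
  | [a], b :: c :: _, _, h₂, h₁, _, hh => by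
    obtain rfl : a = x := by simpa using h₁
    obtain rfl : b = a := by simpa using hh.symm
    exact (hx c (List.isChain_cons_cons.mp h₂).1).elim
  | a :: c :: _, [b], h₁, _, _, h₂, hh => by
    obtain rfl : b = x := by simpa using h₂
    obtain rfl : a = b := by simpa using hh
    exact (hx c (List.isChain_cons_cons.mp h₁).1).elim
  | a :: b :: l₁, a' :: c :: l₂, h₁, h₂, hl₁, hl₂, hh => by
    obtain rfl : a = a' := by simpa using hh
    rw [List.isChain_cons_cons] at h₁ h₂
    obtain rfl := hs a b c h₁.1 h₂.1
    rw [eq_of_isChain_of_getLast?_eq_terminal hs hx h₁.2 h₂.2 (by simpa using hl₁)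
      (by simpa using hl₂) rfl]

theorem List.isChain_tails {α : Type*} :
    ∀ l : List α, IsChain (fun a b => ∃ c, a = c :: b) l.tails
  | [] => by simp
  | [a] => by simp
  | a :: b :: l => List.isChain_cons_cons.mpr ⟨⟨a, rfl⟩, isChain_tails (b :: l)⟩

theorem List.getLast?_tails {α : Type*} : ∀ l : List α, l.tails.getLast? = some []
  | [] => rfl
  | a :: l => by rw [tails_cons, getLast?_cons, getLast?_tails l]; rfl

namespace ConSHN

section Semantics

variable {M : Model} {C : Set (Set (ℕ → M.W))} {π : ℕ → M.W} {i : ℕ}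

theorem AT_empty : AT M ∅ = Timeline M := by simp [AT]

theorem isContext_empty : IsContext M ∅ := ⟨Set.finite_empty, by simp⟩

theorem AT_upd (α : FXY) : AT M (upd M C α i) = {π' ∈ AT M C | satXY M π' i α} := by
  ext π'
  simp only [AT, upd, ruleOf, Set.sInter_insert, Set.mem_inter_iff, Set.mem_ofPred_eq]
  tauto

theorem AT_upd_top : AT M (upd M C FXY.top i) = AT M C := by
  simp [AT_upd, FXY.top, satXY]

theorem sat_toF (a : FXY) : sat M C π i a.toF ↔ satXY M π i a := by
  induction a generalizing i <;> simp [FXY.toF, sat, satXY, *]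

theorem sat_imp (φ ψ : F) : sat M C π i (F.imp φ ψ) ↔ (sat M C π i φ → sat M C π i ψ) := by
  simp [F.imp, sat]

theorem sat_iff (φ ψ : F) : sat M C π i (F.iff φ ψ) ↔ (sat M C π i φ ↔ sat M C π i ψ) := by
  simp only [F.iff, sat, sat_imp, iff_def]

theorem sat_con (α : FXY) (φ : F) :
    sat M C π i (F.con α φ) ↔
      ∀ π' ∈ AT M C, satXY M π' i α → sat M (upd M C α i) π' i φ := by
  simp [sat, AT_upd]

theorem sat_box (φ : F) :
    sat M C π i (F.box φ) ↔ ∀ π' ∈ AT M C, sat M (upd M C FXY.top i) π' i φ := by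
  simp [F.box, sat, AT_upd_top]

theorem sat_con_toF (α β : FXY) :
    sat M C π i (F.con α β.toF) ↔ ∀ π' ∈ AT M C, satXY M π' i α → satXY M π' i β := by
  simp only [sat_con, sat_toF]

theorem sat_box_imp_toF (α β : FXY) :
    sat M C π i (F.box (F.imp α.toF β.toF)) ↔
      ∀ π' ∈ AT M C, satXY M π' i α → satXY M π' i β := by
  simp only [sat_box, sat_imp, sat_toF]

theorem sat_box_atom (p : ℕ) : sat M C π i (F.box (.atom p)) ↔ ∀ π' ∈ AT M C, π' i ∈ M.V p :=
  sat_box _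

theorem sat_con_atom_box_atom (p : ℕ) : sat M C π i (F.con (.atom p) (F.box (.atom p))) := by
  rw [sat_con]
  intro _ _ _
  rw [sat_box_atom, AT_upd]
  exact fun _ h => h.2

theorem not_sat_box_imp_atom_box_atom {p : ℕ} {π₁ π₂ : ℕ → M.W} (h₁ : π₁ ∈ AT M C)
    (h₂ : π₂ ∈ AT M C) (hp₁ : π₁ i ∈ M.V p) (hp₂ : π₂ i ∉ M.V p) :
    ¬ sat M C π i (F.box (F.imp (.atom p) (F.box (.atom p)))) := by
  rw [sat_box]
  intro h
  have hbox := (sat_imp _ _).mp (h π₁ h₁) hp₁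
  rw [sat_box_atom, AT_upd_top] at hbox
  exact hp₂ (hbox π₂ h₂)

end Semantics

theorem valid_con_iff_box_imp (α β : FXY) :
    Valid (F.iff (F.con α β.toF) (F.box (F.imp α.toF β.toF))) := fun _ _ _ _ _ _ => by
  rw [sat_iff, sat_con_toF, sat_box_imp_toF]

def binaryTree (V : ℕ → Set (List Bool)) : Model where
  W := List Bool
  lt w v := ∃ b, v = b :: w
  V := V
  nonempty := ⟨[]⟩
  serial w := ⟨true :: w, true, rfl⟩
  root := []
  reach w := by
    -- the unique path from the root to `w` runs through the suffixes of `w`, shortest first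
    have hhead : w.tails.head? = some w := by cases w <;> rfl
    refine ⟨w.tails.reverse, ⟨?_, ?_, ?_⟩, fun l ⟨hc, hh, hl⟩ => ?_⟩
    · exact List.isChain_reverse.mpr (List.isChain_tails w)
    · rw [List.head?_reverse, List.getLast?_tails]
    · rw [List.getLast?_reverse, hhead]
    · rw [← List.reverse_eq_iff]
      refine List.eq_of_isChain_of_getLast?_eq_terminal (x := [])
        (fun _ _ _ ⟨_, h₁⟩ ⟨_, h₂⟩ => (List.cons_eq_cons.mp (h₁.symm.trans h₂)).2)
        (fun _ ⟨_, h⟩ => List.cons_ne_nil _ _ h.symm) ?_ (List.isChain_tails w) ?_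
        (List.getLast?_tails w) ?_
      · exact List.isChain_reverse.mpr hc
      · simpa using hh
      · simpa [hhead] using hl

theorem mem_timeline_binaryTree (V : ℕ → Set (List Bool)) (b : Bool) :
    (fun i => List.replicate i b) ∈ Timeline (binaryTree V) :=
  ⟨rfl, fun _ => ⟨b, List.replicate_succ⟩⟩

end ConSHN

/-- Fact 2: [α]β ↔ □(α → β) is valid for all α, β ∈ Φ_XY, but with α = p and
φ = □p, the formula [p]□p ↔ □(p → □p) is not valid. -/
theorem fact_con_box_equiv_for_FXY_but_not_in_general :
    (∀ α β : FXY, Valid (F.iff (F.con α β.toF) (F.box (F.imp α.toF β.toF)))) ∧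
    (∀ p : ℕ,
      ¬ Valid (F.iff (F.con (.atom p) (F.box (F.atom p)))
        (F.box (F.imp (F.atom p) (F.box (F.atom p)))))) := by
  refine ⟨valid_con_iff_box_imp, fun p hvalid => ?_⟩
  let M := binaryTree fun _ => {[true]}
  have hline (b : Bool) : (fun i => List.replicate i b) ∈ AT M ∅ :=
    AT_empty ▸ mem_timeline_binaryTree _ b
  have h := (sat_iff _ _).mp (hvalid M ∅ _ 1 isContext_empty (hline true))
  exact not_sat_box_imp_atom_box_atom (i := 1) (hline true) (hline false) rfl (by rintro ⟨⟩)
    (h.mp (sat_con_atom_box_atom p))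
end

section
/- (Lemma 2, item 2, of the paper.) For every α ∈ Φ_XY, every φ ∈ Φ_ConSHN-BT and every closed formula χ, the formula [α](φ ∨ χ) ↔ ([α]φ ∨ [α]χ) is valid. -/
open ConSHN

lemma closed_pi_indep {χ : F} (h : χ.Closed) :
    ∀ (M : Model) (C : Set (Set (ℕ → M.W))) (i : ℕ) (π π' : ℕ → M.W),
      sat M C π i χ ↔ sat M C π' i χ := by
  induction h with
  | con α φ => intro M C i π π'; exact Iff.rfl
  | neg _ ih => intro M C i π π'; exact not_congr (ih M C i π π')
  | conj _ _ ih1 ih2 =>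
      intro M C i π π'; exact and_congr (ih1 M C i π π') (ih2 M C i π π')

/-- Lemma 2, item 2: [α](φ ∨ χ) ↔ ([α]φ ∨ [α]χ) is valid for χ closed. -/
theorem lemma_con_distributes_over_disj_with_closed :
    ∀ (α : FXY) (φ χ : F), χ.Closed →
      Valid (F.iff (.con α (F.or φ χ)) (F.or (.con α φ) (.con α χ))) := by
  intro α φ χ hχ M C π i _ _
  simp only [F.iff, F.imp, F.or, sat]
  set C' := upd M C α i with hC'
  have key : (∀ π' ∈ AT M C',
        ¬(¬ sat M C' π' i φ ∧ ¬ sat M C' π' i χ)) ↔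
      ((∀ π' ∈ AT M C', sat M C' π' i φ) ∨ (∀ π' ∈ AT M C', sat M C' π' i χ)) := by
    constructor
    · intro h
      by_cases hc : ∀ π' ∈ AT M C', sat M C' π' i χ
      · exact Or.inr hc
      · left
        push_neg at hc
        obtain ⟨π₀, hπ₀, hπ₀χ⟩ := hc
        intro π' hπ'
        have hχ' : ¬ sat M C' π' i χ :=
          fun hh => hπ₀χ ((closed_pi_indep hχ M C' i π' π₀).mp hh)
        by_contra hφ'
        exact h π' hπ' ⟨hφ', hχ'⟩
    · rintro (h | h) π' hπ' ⟨h1, h2⟩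
      · exact h1 (h π' hπ')
      · exact h2 (h π' hπ')
  constructor
  · rintro ⟨h1, hn⟩
    rcases key.mp h1 with h | h
    · exact hn fun hx => hx.1 h
    · exact hn fun hx => hx.2 h
  · rintro ⟨hB, hnA⟩
    rcases not_and_or.mp hB with h | h
    · exact hnA (key.mpr (Or.inl (not_not.mp h)))
    · exact hnA (key.mpr (Or.inr (not_not.mp h)))
end
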